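/- arXiv:1705.07012 — 2 statements merged into one kernel-verified Lean document; each statement's English description precedes it below -/
import Mathlib

section
/- If a configuration σ is a local minimum of the anisotropic Ising Hamiltonian H^A, i.e. H^A(σ^x) > H^A(σ) for every single-site flip σ^x with x ∈ Λ, then the (+1)-sites of σ form a union of pairwise isolated rectangles (rectangles possibly wrapping around the torus; ⊟ is the empty union). -/
open scoped Classical

/-- A site of the two-dimensional discrete torus of side length `L`. -/
abbrev Site (L : ℕ) := ZMod L × ZMod L

/-- A configuration, identified with its set of `(+1)`-sites. -/
abbrev Config (L : ℕ) := Finset (Site L)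

/-- The spin value (`+1` or `-1`) of a configuration at a site. -/
noncomputable def spin {L : ℕ} (σ : Config L) (x : Site L) : ℝ :=
  if x ∈ σ then 1 else -1

/-- The configuration obtained by flipping the spin at site `x`. -/
def flipSpin {L : ℕ} (σ : Config L) (x : Site L) : Config L :=
  if x ∈ σ then σ.erase x else insert x σ

/-- Two configurations are adjacent if they differ at exactly one site. -/
def Adjacent {L : ℕ} (σ σ' : Config L) : Prop := ∃ x, σ' = flipSpin σ x

/-- `γ` is a path from `σ` to `σ'`: a finite sequence of configurations starting at `σ`,
ending at `σ'`, in which consecutive configurations are adjacent. -/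
def IsPath {L : ℕ} (σ σ' : Config L) (γ : List (Config L)) : Prop :=
  γ.head? = some σ ∧ γ.getLast? = some σ' ∧ γ.Chain' Adjacent

/-- The communication height `Φ(σ,σ')` for the Hamiltonian `H`: the minimum over paths
`γ : σ → σ'` of the maximal energy along `γ`. -/
noncomputable def commHeight {L : ℕ} (H : Config L → ℝ) (σ σ' : Config L) : ℝ :=
  sInf { M | ∃ γ : List (Config L), IsPath σ σ' γ ∧ ∀ η ∈ γ, H η ≤ M }

/-- A path is optimal if its maximal energy attains the communication height. -/
def IsOptimalPath {L : ℕ} (H : Config L → ℝ) (σ σ' : Config L) (γ : List (Config L)) : Prop :=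
  IsPath σ σ' γ ∧ ∀ η ∈ γ, H η ≤ commHeight H σ σ'

/-- The all-`(-1)` configuration `⊟`. -/
def boxMinus (L : ℕ) : Config L := ∅

/-- The all-`(+1)` configuration `⊞`. -/
def boxPlus (L : ℕ) [NeZero L] : Config L := Finset.univ

/-- Two sites are nearest neighbours on the torus. -/
def SiteAdj {L : ℕ} (x y : Site L) : Prop :=
  y = x + (1, 0) ∨ y = x + (-1, 0) ∨ y = x + (0, 1) ∨ y = x + (0, -1)

/-- `x` and `y` are connected inside the set of `(+1)`-sites of `σ` by a
nearest-neighbour chain. -/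
def ConnectedIn {L : ℕ} (σ : Config L) (x y : Site L) : Prop :=
  Relation.ReflTransGen (fun u v => u ∈ σ ∧ v ∈ σ ∧ SiteAdj u v) x y

/-- The connected component of the `(+1)`-sites of `σ` containing `x`. -/
noncomputable def component {L : ℕ} (σ : Config L) (x : Site L) : Config L :=
  σ.filter fun y => ConnectedIn σ x y

/-- `σ` consists of a single (nonempty) connected component of `(+1)`-sites. -/
def IsSingleDroplet {L : ℕ} (σ : Config L) : Prop :=
  σ.Nonempty ∧ ∀ x ∈ σ, ∀ y ∈ σ, ConnectedIn σ x y

/-- Two droplets are isolated: their Euclidean distance is at least `√2`, i.e. no site of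
one is a nearest neighbour of a site of the other. -/
def Isolated {L : ℕ} (A B : Config L) : Prop :=
  ∀ x ∈ A, ∀ y ∈ B, ¬ SiteAdj x y

/-- The rectangle on the torus with lower-left corner `a`, horizontal side `l₁` and
vertical side `l₂`. -/
def rectC {L : ℕ} (a : Site L) (l₁ l₂ : ℕ) : Config L :=
  (Finset.range l₁ ×ˢ Finset.range l₂).image
    fun p => a + ((p.1 : ZMod L), (p.2 : ZMod L))

/-- The horizontal side length `P_H R(σ)` of the rectangular envelope of `σ`. -/
noncomputable def PH {L : ℕ} (σ : Config L) : ℕ :=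
  sInf { l | ∃ c : ZMod L, ∀ x ∈ σ, ∃ i < l, x.1 = c + (i : ZMod L) }

/-- The vertical side length `P_V R(σ)` of the rectangular envelope of `σ`. -/
noncomputable def PV {L : ℕ} (σ : Config L) : ℕ :=
  sInf { l | ∃ c : ZMod L, ∀ x ∈ σ, ∃ i < l, x.2 = c + (i : ZMod L) }

/-- `σ` does not wrap around the torus horizontally: some column is empty. -/
def NoWrapH {L : ℕ} (σ : Config L) : Prop := ∃ c : ZMod L, ∀ x ∈ σ, x.1 ≠ c

/-- `σ` does not wrap around the torus vertically: some row is empty. -/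
def NoWrapV {L : ℕ} (σ : Config L) : Prop := ∃ c : ZMod L, ∀ x ∈ σ, x.2 ≠ c

/-- `R` is the rectangular envelope of `σ`: the smallest rectangle on the torus
containing the `(+1)`-sites of `σ`. -/
def IsEnvelope {L : ℕ} (σ R : Config L) : Prop :=
  (∃ a l₁ l₂, R = rectC a l₁ l₂) ∧ σ ⊆ R ∧
    ∀ R' : Config L, (∃ a l₁ l₂, R' = rectC a l₁ l₂) → σ ⊆ R' → R.card ≤ R'.card

/-- The set `R(l₁, l₂) = R(l₁ × l₂) ∪ R(l₂ × l₁)` of single rectangles with side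
lengths `l₁` and `l₂`. -/
def RSet {L : ℕ} (l₁ l₂ : ℕ) (σ : Config L) : Prop :=
  (∃ a : Site L, σ = rectC a l₁ l₂) ∨ (∃ a : Site L, σ = rectC a l₂ l₁)

/-- The set `R(l−1, l)^{1pr}`: a rectangle with sides `l−1` and `l` together with one
protuberance attached to one of its longer sides. -/
def RSet1pr {L : ℕ} (l : ℕ) (σ : Config L) : Prop :=
  (∃ a : Site L, ∃ j < l,
      σ = insert (a + ((-1 : ZMod L), (j : ZMod L))) (rectC a (l - 1) l) ∨
      σ = insert (a + (((l - 1 : ℕ) : ZMod L), (j : ZMod L))) (rectC a (l - 1) l)) ∨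
  (∃ a : Site L, ∃ j < l,
      σ = insert (a + ((j : ZMod L), (-1 : ZMod L))) (rectC a l (l - 1)) ∨
      σ = insert (a + ((j : ZMod L), ((l - 1 : ℕ) : ZMod L))) (rectC a l (l - 1)))

/-- The anisotropic Ising Hamiltonian `H^A`. -/
noncomputable def HA {L : ℕ} [NeZero L] (JH JV h : ℝ) (σ : Config L) : ℝ :=
  - (JH / 2) * ∑ x : Site L, spin σ x * spin σ (x + (1, 0))
  - (JV / 2) * ∑ x : Site L, spin σ x * spin σ (x + (0, 1))
  - (h / 2) * ∑ x : Site L, spin σ x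

/-- The next-nearest-neighbour Ising Hamiltonian `H^NN`. -/
noncomputable def HNN {L : ℕ} [NeZero L] (Jt K h : ℝ) (σ : Config L) : ℝ :=
  - (Jt / 2) * ((∑ x : Site L, spin σ x * spin σ (x + (1, 0)))
      + ∑ x : Site L, spin σ x * spin σ (x + (0, 1)))
  - (K / 2) * ((∑ x : Site L, spin σ x * spin σ (x + (1, 1)))
      + ∑ x : Site L, spin σ x * spin σ (x + (1, -1)))
  - (h / 2) * ∑ x : Site L, spin σ x

/-- The octagon `Q(Dn, Dw; ℓ_ne, ℓ_nw, ℓ_sw, ℓ_se)` with lower-left corner `a`, obtained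
from the `Dn × Dw` rectangle by cutting `ℓ_a − 1` oblique bars from corner `a`. -/
def octagon {L : ℕ} (a : Site L) (Dn Dw lne lnw lsw lse : ℕ) : Config L :=
  ((Finset.range Dn ×ˢ Finset.range Dw).filter fun p =>
      lsw ≤ p.1 + p.2 + 1 ∧ lse ≤ (Dn - 1 - p.1) + p.2 + 1 ∧
      lnw ≤ p.1 + (Dw - 1 - p.2) + 1 ∧ lne ≤ (Dn - 1 - p.1) + (Dw - 1 - p.2) + 1).image
    fun p => a + ((p.1 : ZMod L), (p.2 : ZMod L))

/-- The set `Q(Dn, Dw)` of octagons with side lengths `Dn`, `Dw`, all oblique edge lengths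
equal to `l` (including rotations and translations). -/
def QSet {L : ℕ} (Dn Dw l : ℕ) (σ : Config L) : Prop :=
  (∃ a : Site L, σ = octagon a Dn Dw l l l l) ∨
  (∃ a : Site L, σ = octagon a Dw Dn l l l l)

/-- The set `Q(D − 1, D)^{1pr}`: an octagon from `Q(D − 1, D; l)` together with one
protuberance attached at the interior of one of its longest coordinate edges. -/
def Q1pr {L : ℕ} (D l : ℕ) (σ : Config L) : Prop :=
  (∃ a : Site L, ∃ j : ℕ, l ≤ j ∧ j + l + 1 ≤ D ∧
      (σ = insert (a + ((-1 : ZMod L), (j : ZMod L))) (octagon a (D - 1) D l l l l) ∨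
       σ = insert (a + (((D - 1 : ℕ) : ZMod L), (j : ZMod L))) (octagon a (D - 1) D l l l l))) ∨
  (∃ a : Site L, ∃ j : ℕ, l ≤ j ∧ j + l + 1 ≤ D ∧
      (σ = insert (a + ((j : ZMod L), (-1 : ZMod L))) (octagon a D (D - 1) l l l l) ∨
       σ = insert (a + ((j : ZMod L), ((D - 1 : ℕ) : ZMod L))) (octagon a D (D - 1) l l l l)))

/-- A stable octagon: all four coordinate edges and all four oblique edges have
length at least 2. -/
def IsStableOctagon {L : ℕ} (σ : Config L) : Prop :=
  ∃ a : Site L, ∃ Dn Dw lne lnw lsw lse : ℕ,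
    2 ≤ lne ∧ 2 ≤ lnw ∧ 2 ≤ lsw ∧ 2 ≤ lse ∧
    lne + lnw ≤ Dn ∧ lsw + lse ≤ Dn ∧ lnw + lsw ≤ Dw ∧ lne + lse ≤ Dw ∧
    σ = octagon a Dn Dw lne lnw lsw lse

/-- A rectangle that wraps around the torus. -/
def IsWrappingRect {L : ℕ} (σ : Config L) : Prop :=
  ∃ a : Site L, ∃ l₁ l₂ : ℕ, 1 ≤ l₁ ∧ l₁ ≤ L ∧ 1 ≤ l₂ ∧ l₂ ≤ L ∧ (l₁ = L ∨ l₂ = L) ∧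
    σ = rectC a l₁ l₂

/-- The Hamiltonian `H^±` of the Ising model with alternating magnetic field. -/
noncomputable def Hpm {L : ℕ} [NeZero L] (J hodd heven : ℝ) (σ : Config L) : ℝ :=
  - (J / 2) * ((∑ x : Site L, spin σ x * spin σ (x + (1, 0)))
      + ∑ x : Site L, spin σ x * spin σ (x + (0, 1)))
  + (hodd / 2) * ∑ x ∈ Finset.univ.filter (fun x : Site L => x.2.val % 2 = 1), spin σ x
  - (heven / 2) * ∑ x ∈ Finset.univ.filter (fun x : Site L => x.2.val % 2 = 0), spin σ x

/-- A stable rectangle for the alternating-field model: horizontal side `l₁ ≥ 2`,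
odd vertical side `l₂ ≥ 3`, bottom (and hence top) row in the even rows. -/
def IsStableRect {L : ℕ} (σ : Config L) : Prop :=
  ∃ a : Site L, ∃ l₁ l₂ : ℕ, 2 ≤ l₁ ∧ l₁ ≤ L ∧ 3 ≤ l₂ ∧ l₂ ≤ L ∧ Odd l₂ ∧
    a.2.val % 2 = 0 ∧ σ = rectC a l₁ l₂

/-- A configuration in `P₁` with protuberance at `p`: an `(lb−1) × lh` rectangle with
bottom and top rows in the even rows, plus a protuberance `p` attached to one of the
longer (vertical) sides in an even row. -/
def P1at {L : ℕ} (lb lh : ℕ) (σ : Config L) (p : Site L) : Prop :=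
  ∃ a : Site L, a.2.val % 2 = 0 ∧ ∃ j : ℕ, j < lh ∧ j % 2 = 0 ∧
    (p = a + ((-1 : ZMod L), (j : ZMod L)) ∨
     p = a + (((lb - 1 : ℕ) : ZMod L), (j : ZMod L))) ∧
    σ = insert p (rectC a (lb - 1) lh)

/-- The set `P₁`. -/
def P1 {L : ℕ} (lb lh : ℕ) (σ : Config L) : Prop := ∃ p : Site L, P1at lb lh σ p

/-- The set `C₁`: obtained from a configuration in `P₁` by adding a second `(+1)`-spin
in an odd row adjacent to the protuberance. -/
def C1 {L : ℕ} (lb lh : ℕ) (σ : Config L) : Prop :=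
  ∃ σ' : Config L, ∃ p : Site L, P1at lb lh σ' p ∧
    (σ = insert (p + ((0 : ZMod L), (1 : ZMod L))) σ' ∨
     σ = insert (p + ((0 : ZMod L), (-1 : ZMod L))) σ')

/-- The set `P₂`: an `lb × (lh−2)` rectangle with bottom and top rows in the even rows,
plus a vertical or horizontal bar of length 2 attached above or below. -/
def P2 {L : ℕ} (lb lh : ℕ) (σ : Config L) : Prop :=
  ∃ a : Site L, a.2.val % 2 = 0 ∧
    ((∃ i : ℕ, i < lb ∧
        σ = insert (a + ((i : ZMod L), ((lh - 2 : ℕ) : ZMod L)))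
            (insert (a + ((i : ZMod L), ((lh - 1 : ℕ) : ZMod L))) (rectC a lb (lh - 2)))) ∨
     (∃ i : ℕ, i + 2 ≤ lb ∧
        σ = insert (a + ((i : ZMod L), ((lh - 2 : ℕ) : ZMod L)))
            (insert (a + (((i + 1 : ℕ) : ZMod L), ((lh - 2 : ℕ) : ZMod L)))
              (rectC a lb (lh - 2)))) ∨
     (∃ i : ℕ, i < lb ∧
        σ = insert (a + ((i : ZMod L), (-1 : ZMod L)))
            (insert (a + ((i : ZMod L), (-2 : ZMod L))) (rectC a lb (lh - 2)))) ∨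
     (∃ i : ℕ, i + 2 ≤ lb ∧
        σ = insert (a + ((i : ZMod L), (-1 : ZMod L)))
            (insert (a + (((i + 1 : ℕ) : ZMod L), (-1 : ZMod L))) (rectC a lb (lh - 2)))))

/-- The set `C₂`: an `lb × (lh−2)` rectangle with bottom and top rows in the even rows,
plus, above or below it, a vertical bar of length 2 together with a `(+1)`-spin
adjacent to the bar in an odd row. -/
def C2 {L : ℕ} (lb lh : ℕ) (σ : Config L) : Prop :=
  ∃ a : Site L, a.2.val % 2 = 0 ∧
    ((∃ i : ℕ, i < lb ∧ ∃ s : ZMod L, (s = 1 ∨ s = -1) ∧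
        σ = insert (a + ((i : ZMod L) + s, ((lh - 2 : ℕ) : ZMod L)))
            (insert (a + ((i : ZMod L), ((lh - 2 : ℕ) : ZMod L)))
              (insert (a + ((i : ZMod L), ((lh - 1 : ℕ) : ZMod L))) (rectC a lb (lh - 2))))) ∨
     (∃ i : ℕ, i < lb ∧ ∃ s : ZMod L, (s = 1 ∨ s = -1) ∧
        σ = insert (a + ((i : ZMod L) + s, (-1 : ZMod L)))
            (insert (a + ((i : ZMod L), (-1 : ZMod L)))
              (insert (a + ((i : ZMod L), (-2 : ZMod L))) (rectC a lb (lh - 2))))))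


/-!
Flipping a `(-1)`-site `z` to `+1` changes `H^A` by
`-JH (σ(z+e₁) + σ(z-e₁)) - JV (σ(z+e₂) + σ(z-e₂)) - h`, which is `≤ -h < 0` as soon as `z` has a
`(+1)`-neighbour horizontally and one vertically (here `JH, JV > 0`). So in a local minimum
every such "corner" site is already `+1`.

Read the torus in integer coordinates around a `(+1)`-site `x`. Corner closure propagates the
maximal row run through `x` along the maximal column run, so these two runs span a box of
`(+1)`-sites; it also makes the columns (rows) just beyond the box empty, unless the run wraps
around the torus. Hence the box is closed under adjacency in `σ` and is the component of `x`.
-/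

theorem Fintype.sum_mul_shift_update {G R : Type*} [AddCommGroup G] [Fintype G] [DecidableEq G]
    [CommRing R] (s : G → R) {e : G} (he : e ≠ 0) (x : G) (v : R) :
    ∑ y, Function.update s x v y * Function.update s x v (y + e) =
      ∑ y, s y * s (y + e) + (v - s x) * (s (x + e) + s (x - e)) := by
  have hs : Function.update s x v = fun y => s y + if y = x then v - s x else 0 := by
    ext y; by_cases hy : y = x <;> simp [Function.update, hy]
  have hshift : ∑ y, s y * (if y + e = x then v - s x else 0) = s (x - e) * (v - s x) := by
    simp [← eq_sub_iff_add_eq]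
  have hdiag : ∀ y, ((if y = x then v - s x else 0) * if y + e = x then v - s x else 0) = 0 := by
    intro y; split_ifs <;> simp_all
  simp only [hs, mul_add, add_mul, hdiag, Finset.sum_add_distrib, hshift, Finset.sum_const_zero]
  simp only [ite_mul, zero_mul, Finset.sum_ite_eq', Finset.mem_univ, ↓reduceIte, add_zero]
  ring

theorem Int.Icc_induction {P : ℤ → Prop} {lo hi : ℤ} (h0 : P 0)
    (hup : ∀ i, 0 ≤ i → i < hi → P i → P (i + 1))
    (hdown : ∀ i, lo < i → i ≤ 0 → P i → P (i - 1)) :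
    ∀ i, lo ≤ i → i ≤ hi → P i := by
  intro i hlo hhi
  rcases le_total 0 i with hi | hi
  · clear hlo
    induction i, hi using Int.leInduction with
    | base => exact h0
    | succ n hn ih => exact hup n hn (by omega) (ih (by omega))
  · clear hhi
    induction i, hi using Int.leInductionDown with
    | base => exact h0
    | pred n hn ih => exact hdown n (by omega) hn (ih (by omega))

/-- `[lo, hi]` is the maximal interval around `0` on which `P` holds, except that it is cut to
one period `n` when `P` holds on a whole period. -/
structure IsMaxRun (P : ℤ → Prop) (n : ℕ) (lo hi : ℤ) : Prop where
  lo_nonpos : lo ≤ 0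
  hi_nonneg : 0 ≤ hi
  sub_lt : hi - lo < n
  holds : ∀ i, lo ≤ i → i ≤ hi → P i
  maximal : hi - lo + 1 = n ∨ ¬P (lo - 1) ∧ ¬P (hi + 1)

theorem IsMaxRun.one_le_toNat_length {P : ℤ → Prop} {n : ℕ} {lo hi : ℤ} (h : IsMaxRun P n lo hi) :
    1 ≤ (hi - lo + 1).toNat := by
  have := h.lo_nonpos; have := h.hi_nonneg; omega

theorem IsMaxRun.toNat_length_le {P : ℤ → Prop} {n : ℕ} {lo hi : ℤ} (h : IsMaxRun P n lo hi) :
    (hi - lo + 1).toNat ≤ n := by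
  have := h.sub_lt; omega

theorem exists_isMaxRun {P : ℤ → Prop} {n : ℕ} [NeZero n] (hP : Function.Periodic P n)
    (h0 : P 0) : ∃ lo hi, IsMaxRun P n lo hi := by
  have hn := NeZero.pos n
  by_cases hall : ∀ i : ℕ, i < n → P i
  · refine ⟨0, n - 1, ⟨le_rfl, by omega, by omega, fun i h1 h2 => ?_, Or.inl (by ring)⟩⟩
    lift i to ℕ using h1
    exact hall i (by omega)
  push Not at hall
  obtain ⟨m, hmn, hm⟩ := hall
  have hr : ∃ r : ℕ, ¬P r := ⟨m, hm⟩
  have hl : ∃ l : ℕ, ¬P (-l) := ⟨n - m, by rwa [Nat.cast_sub hmn.le, neg_sub, hP.sub_eq]⟩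
  set r := Nat.find hr
  set l := Nat.find hl
  have hr0 : r ≠ 0 := fun h => Nat.find_spec hr (by simpa [r, h] using h0)
  have hl0 : l ≠ 0 := fun h => Nat.find_spec hl (by simpa [l, h] using h0)
  have hrn : r ≤ m := Nat.find_min' hr hm
  -- `r - n` is a failure of `P` to the left of `0`, so the run has length at most `n - 1`
  have hlr : l ≤ n - r := Nat.find_min' hl (by
    rw [Nat.cast_sub (by omega), neg_sub, hP.sub_eq]; exact Nat.find_spec hr)
  refine ⟨1 - l, r - 1, ⟨by omega, by omega, by omega, fun i h1 h2 => ?_, Or.inr ⟨?_, ?_⟩⟩⟩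
  · rcases le_total 0 i with hi | hi
    · lift i to ℕ using hi
      exact not_not.mp (Nat.find_min hr (by omega : i < r))
    · obtain ⟨k, rfl⟩ : ∃ k : ℕ, i = -k := ⟨i.natAbs, by omega⟩
      exact not_not.mp (Nat.find_min hl (by omega : k < l))
  · simpa using Nat.find_spec hl
  · simpa using Nat.find_spec hr

def CornerClosed (τ : ℤ → ℤ → Prop) : Prop :=
  ∀ ⦃i i' j j'⦄, (i' = i + 1 ∨ i' = i - 1) → (j' = j + 1 ∨ j' = j - 1) → τ i' j → τ i j' → τ i j

namespace CornerClosed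

variable {τ : ℤ → ℤ → Prop} {n : ℕ} {lo hi lo₁ hi₁ lo₂ hi₂ : ℤ}

theorem flip (hτ : CornerClosed τ) : CornerClosed (flip τ) :=
  fun _ _ _ _ hi hj h₁ h₂ => hτ hj hi h₂ h₁

theorem row_of_adjacent_row (hτ : CornerClosed τ) {j j' : ℤ} (hj : j' = j + 1 ∨ j' = j - 1)
    (hrow : ∀ i, lo ≤ i → i ≤ hi → τ i j) (h0 : τ 0 j') (hlo : lo ≤ 0) (hhi : 0 ≤ hi) :
    ∀ i, lo ≤ i → i ≤ hi → τ i j' :=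
  Int.Icc_induction h0 (fun i _ _ h => hτ (by omega) (by omega) h (hrow _ (by omega) (by omega)))
    (fun i _ _ h => hτ (by omega) (by omega) h (hrow _ (by omega) (by omega)))

theorem not_col_of_adjacent_col (hτ : CornerClosed τ) {c c' : ℤ} (hc : c' = c + 1 ∨ c' = c - 1)
    (hcol : ∀ j, lo ≤ j → j ≤ hi → τ c' j) (h0 : ¬τ c 0) (hlo : lo ≤ 0) (hhi : 0 ≤ hi) :
    ∀ j, lo ≤ j → j ≤ hi → ¬τ c j :=
  Int.Icc_induction h0 (fun j _ _ h h' => h (hτ hc (by omega) (hcol j (by omega) (by omega)) h'))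
    (fun j _ _ h h' => h (hτ hc (by omega) (hcol j (by omega) (by omega)) h'))

theorem box (hτ : CornerClosed τ) (h₁ : IsMaxRun (τ · 0) n lo₁ hi₁)
    (h₂ : IsMaxRun (τ 0 ·) n lo₂ hi₂) :
    ∀ i j, lo₁ ≤ i → i ≤ hi₁ → lo₂ ≤ j → j ≤ hi₂ → τ i j := by
  intro i j hi hi' hj hj'
  have step : ∀ j j', lo₂ ≤ j' → j' ≤ hi₂ → (j' = j + 1 ∨ j' = j - 1) →
      (∀ i, lo₁ ≤ i → i ≤ hi₁ → τ i j) → ∀ i, lo₁ ≤ i → i ≤ hi₁ → τ i j' :=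
    fun j j' h h' hj ih => hτ.row_of_adjacent_row hj ih (h₂.holds j' h h') h₁.lo_nonpos h₁.hi_nonneg
  have := h₂.lo_nonpos
  have := h₂.hi_nonneg
  exact Int.Icc_induction (P := fun j => ∀ i, lo₁ ≤ i → i ≤ hi₁ → τ i j) h₁.holds
    (fun j _ _ => step j (j + 1) (by omega) (by omega) (by omega))
    (fun j _ _ => step j (j - 1) (by omega) (by omega) (by omega)) j hj hj' i hi hi'

theorem exists_modEq_of_adjacent (hτ : CornerClosed τ) (h₁ : IsMaxRun (τ · 0) n lo₁ hi₁)
    (h₂ : IsMaxRun (τ 0 ·) n lo₂ hi₂) {i i' j : ℤ} (hi : lo₁ ≤ i) (hi' : i ≤ hi₁) (hj : lo₂ ≤ j)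
    (hj' : j ≤ hi₂) (hii' : i' = i + 1 ∨ i' = i - 1) (h : τ i' j) :
    ∃ k, lo₁ ≤ k ∧ k ≤ hi₁ ∧ k ≡ i' [ZMOD n] := by
  by_cases hin : lo₁ ≤ i' ∧ i' ≤ hi₁
  · exact ⟨i', hin.1, hin.2, rfl⟩
  have hbox := hτ.box h₁ h₂
  have hedge : i' = hi₁ + 1 ∨ i' = lo₁ - 1 := by omega
  rcases h₁.maximal with hfull | ⟨hlo, hhi⟩
  · rcases hedge with rfl | rfl
    · exact ⟨lo₁, le_rfl, by omega, Int.modEq_iff_dvd.mpr ⟨1, by omega⟩⟩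
    · exact ⟨hi₁, by omega, le_rfl, Int.modEq_iff_dvd.mpr ⟨-1, by omega⟩⟩
  · exfalso
    rcases hedge with rfl | rfl
    · exact hτ.not_col_of_adjacent_col (c' := hi₁) (by omega)
        (fun j h h' => hbox _ _ (by omega) le_rfl h h') hhi h₂.lo_nonpos h₂.hi_nonneg j hj hj' h
    · exact hτ.not_col_of_adjacent_col (c' := lo₁) (by omega)
        (fun j h h' => hbox _ _ le_rfl (by omega) h h') hlo h₂.lo_nonpos h₂.hi_nonneg j hj hj' h

end CornerClosed

section Torus

variable {L : ℕ}

def offset (x : Site L) (i j : ℤ) : Site L := x + ((i : ZMod L), (j : ZMod L))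

@[simp] theorem offset_zero (x : Site L) : offset x 0 0 = x := by simp [offset]

theorem offset_add (x : Site L) (i j a b : ℤ) :
    offset x (i + a) (j + b) = offset x i j + ((a : ZMod L), (b : ZMod L)) := by
  simp only [offset, Int.cast_add, add_assoc, Prod.mk_add_mk]

theorem offset_add_fst (x : Site L) (i j a : ℤ) :
    offset x (i + a) j = offset x i j + ((a : ZMod L), 0) := by
  simpa using offset_add x i j a 0

theorem offset_add_snd (x : Site L) (i j b : ℤ) :
    offset x i (j + b) = offset x i j + (0, (b : ZMod L)) := by
  simpa using offset_add x i j 0 b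

theorem offset_congr (x : Site L) {i i' j j' : ℤ} (hi : i ≡ i' [ZMOD L]) (hj : j ≡ j' [ZMOD L]) :
    offset x i j = offset x i' j' := by
  rw [offset, offset, (ZMod.intCast_eq_intCast_iff i i' L).mpr hi,
    (ZMod.intCast_eq_intCast_iff j j' L).mpr hj]

theorem siteAdj_offset_iff {x v : Site L} {i j : ℤ} :
    SiteAdj (offset x i j) v ↔ v = offset x (i + 1) j ∨ v = offset x (i - 1) j ∨
      v = offset x i (j + 1) ∨ v = offset x i (j - 1) := by
  simp only [SiteAdj, sub_eq_add_neg, offset_add_fst, offset_add_snd, Int.cast_one, Int.cast_neg]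

end Torus

section Energy

variable {L : ℕ}

theorem spin_insert (σ : Config L) (z : Site L) :
    spin (insert z σ) = Function.update (spin σ) z 1 := by
  ext y; by_cases hy : y = z <;> simp [spin, hy]

theorem spin_of_notMem {σ : Config L} {z : Site L} (hz : z ∉ σ) : spin σ z = -1 := if_neg hz

theorem HA_insert [NeZero L] (JH JV h : ℝ) {σ : Config L} {z : Site L} (hz : z ∉ σ)
    (hL : (1 : ZMod L) ≠ 0) :
    HA JH JV h (insert z σ) = HA JH JV h σ
      - JH * (spin σ (z + (1, 0)) + spin σ (z + (-1, 0)))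
      - JV * (spin σ (z + (0, 1)) + spin σ (z + (0, -1))) - h := by
  have hH : ((1, 0) : Site L) ≠ 0 := by simp [Prod.ext_iff, hL]
  have hV : ((0, 1) : Site L) ≠ 0 := by simp [Prod.ext_iff, hL]
  have hsum := Finset.sum_eq_add_sum_sdiff_singleton_of_mem (Finset.mem_univ z) (spin σ)
  simp only [HA, spin_insert, Fintype.sum_mul_shift_update _ hH, Fintype.sum_mul_shift_update _ hV,
    Finset.sum_update_of_mem (Finset.mem_univ z), spin_of_notMem hz, sub_eq_add_neg,
    Prod.neg_mk, neg_zero] at hsum ⊢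
  rw [hsum]
  ring

theorem spin_add_spin_nonneg {σ : Config L} {a b : Site L} (h : a ∈ σ ∨ b ∈ σ) :
    0 ≤ spin σ a + spin σ b := by
  unfold spin; rcases h with h | h <;> split_ifs <;> norm_num

theorem cornerClosed_of_isLocalMin [NeZero L] {JH JV h : ℝ} (hJHV : JV < JH) (hh0 : 0 < h)
    (hh : h < 2 * JV) {σ : Config L}
    (hmin : ∀ x : Site L, HA JH JV h σ < HA JH JV h (flipSpin σ x)) (x : Site L) :
    CornerClosed fun i j => offset x i j ∈ σ := by
  intro i i' j j' hi hj hi' hj'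
  by_contra hz
  obtain rfl | hL := eq_or_ne L 1
  · exact hz (Subsingleton.elim (offset x i' j) (offset x i j) ▸ hi')
  have hH : 0 ≤ spin σ (offset x i j + (1, 0)) + spin σ (offset x i j + (-1, 0)) := by
    apply spin_add_spin_nonneg
    rcases hi with rfl | rfl <;> simp_all [sub_eq_add_neg, offset_add_fst]
  have hV : 0 ≤ spin σ (offset x i j + (0, 1)) + spin σ (offset x i j + (0, -1)) := by
    apply spin_add_spin_nonneg
    rcases hj with rfl | rfl <;> simp_all [sub_eq_add_neg, offset_add_snd]
  have hdrop := hmin (offset x i j)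
  rw [flipSpin, if_neg hz, HA_insert JH JV h hz (by rwa [Ne, ZMod.one_eq_zero_iff])] at hdrop
  have := mul_nonneg (by linarith : (0 : ℝ) ≤ JH) hH
  have := mul_nonneg (by linarith : (0 : ℝ) ≤ JV) hV
  linarith

end Energy

section Component

variable {L : ℕ} {σ : Config L} {x : Site L}

theorem SiteAdj.symm {u v : Site L} (h : SiteAdj u v) : SiteAdj v u := by
  unfold SiteAdj at *
  rcases h with rfl | rfl | rfl | rfl <;> simp [add_assoc]

theorem ConnectedIn.symm {u v : Site L} (h : ConnectedIn σ u v) : ConnectedIn σ v u := by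
  induction h with
  | refl => exact Relation.ReflTransGen.refl
  | tail _ hvw ih => exact ih.head ⟨hvw.2.1, hvw.1, hvw.2.2.symm⟩

theorem isolated_component_of_not_connectedIn {y : Site L} (h : ¬ConnectedIn σ x y) :
    Isolated (component σ x) (component σ y) := by
  intro u hu v hv huv
  simp only [component, Finset.mem_filter] at hu hv
  exact h ((hu.2.tail ⟨hu.1, hv.1, huv⟩).trans hv.2.symm)

theorem connectedIn_offset {lo₁ hi₁ lo₂ hi₂ : ℤ}
    (hbox : ∀ i j, lo₁ ≤ i → i ≤ hi₁ → lo₂ ≤ j → j ≤ hi₂ → offset x i j ∈ σ)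
    (hlo₁ : lo₁ ≤ 0) (hhi₁ : 0 ≤ hi₁) (hlo₂ : lo₂ ≤ 0) (hhi₂ : 0 ≤ hi₂) :
    ∀ i j, lo₁ ≤ i → i ≤ hi₁ → lo₂ ≤ j → j ≤ hi₂ → ConnectedIn σ x (offset x i j) := by
  have hrow : ∀ i, lo₁ ≤ i → i ≤ hi₁ → ConnectedIn σ x (offset x i 0) :=
    Int.Icc_induction (by rw [offset_zero]; exact Relation.ReflTransGen.refl)
      (fun i _ _ h => h.tail ⟨hbox _ _ (by omega) (by omega) hlo₂ hhi₂,
        hbox _ _ (by omega) (by omega) hlo₂ hhi₂, siteAdj_offset_iff.mpr (by simp)⟩)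
      (fun i _ _ h => h.tail ⟨hbox _ _ (by omega) (by omega) hlo₂ hhi₂,
        hbox _ _ (by omega) (by omega) hlo₂ hhi₂, siteAdj_offset_iff.mpr (by simp)⟩)
  intro i j hi hi'
  exact Int.Icc_induction (P := fun j => ConnectedIn σ x (offset x i j)) (hrow i hi hi')
    (fun j _ _ h => h.tail ⟨hbox _ _ hi hi' (by omega) (by omega),
      hbox _ _ hi hi' (by omega) (by omega), siteAdj_offset_iff.mpr (by simp)⟩)
    (fun j _ _ h => h.tail ⟨hbox _ _ hi hi' (by omega) (by omega),
      hbox _ _ hi hi' (by omega) (by omega), siteAdj_offset_iff.mpr (by simp)⟩) j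

end Component

section Rectangle

variable {L : ℕ} {σ : Config L} {x : Site L}

theorem mem_rectC_offset_iff {y : Site L} {lo₁ hi₁ lo₂ hi₂ : ℤ} :
    y ∈ rectC (offset x lo₁ lo₂) (hi₁ - lo₁ + 1).toNat (hi₂ - lo₂ + 1).toNat ↔
      ∃ i j, lo₁ ≤ i ∧ i ≤ hi₁ ∧ lo₂ ≤ j ∧ j ≤ hi₂ ∧ y = offset x i j := by
  have hcast (a : ℤ) (p : ℕ) (h : (p : ℤ) = a) : (p : ZMod L) = (a : ZMod L) := by
    rw [← h, Int.cast_natCast]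
  simp only [rectC, Finset.mem_image, Finset.mem_product, Finset.mem_range, Prod.exists]
  constructor
  · rintro ⟨p, q, ⟨hp, hq⟩, rfl⟩
    exact ⟨lo₁ + p, lo₂ + q, by omega, by omega, by omega, by omega,
      by rw [offset_add, hcast _ p rfl, hcast _ q rfl]⟩
  · rintro ⟨i, j, hi, hi', hj, hj', rfl⟩
    refine ⟨(i - lo₁).toNat, (j - lo₂).toNat, ⟨by omega, by omega⟩, ?_⟩
    rw [hcast (i - lo₁) _ (by omega), hcast (j - lo₂) _ (by omega), ← offset_add]
    congr 1 <;> ring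

theorem exists_offset_of_connectedIn {lo₁ hi₁ lo₂ hi₂ : ℤ}
    (hτ : CornerClosed fun i j => offset x i j ∈ σ)
    (h₁ : IsMaxRun (offset x · 0 ∈ σ) L lo₁ hi₁) (h₂ : IsMaxRun (offset x 0 · ∈ σ) L lo₂ hi₂)
    {y : Site L} (hy : ConnectedIn σ x y) :
    ∃ i j, lo₁ ≤ i ∧ i ≤ hi₁ ∧ lo₂ ≤ j ∧ j ≤ hi₂ ∧ y = offset x i j := by
  induction hy with
  | refl => exact ⟨0, 0, h₁.lo_nonpos, h₁.hi_nonneg, h₂.lo_nonpos, h₂.hi_nonneg, by simp⟩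
  | tail _ hstep ih =>
    obtain ⟨i, j, hi, hi', hj, hj', rfl⟩ := ih
    obtain ⟨-, hv, hadj⟩ := hstep
    have horiz {i'} (hii' : i' = i + 1 ∨ i' = i - 1) (hv : offset x i' j ∈ σ) :
        ∃ k l, lo₁ ≤ k ∧ k ≤ hi₁ ∧ lo₂ ≤ l ∧ l ≤ hi₂ ∧ offset x i' j = offset x k l := by
      obtain ⟨k, hk, hk', hmod⟩ := hτ.exists_modEq_of_adjacent h₁ h₂ hi hi' hj hj' hii' hv
      exact ⟨k, j, hk, hk', hj, hj', offset_congr x hmod.symm rfl⟩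
    have vert {j'} (hjj' : j' = j + 1 ∨ j' = j - 1) (hv : offset x i j' ∈ σ) :
        ∃ k l, lo₁ ≤ k ∧ k ≤ hi₁ ∧ lo₂ ≤ l ∧ l ≤ hi₂ ∧ offset x i j' = offset x k l := by
      obtain ⟨l, hl, hl', hmod⟩ := hτ.flip.exists_modEq_of_adjacent h₂ h₁ hj hj' hi hi' hjj' hv
      exact ⟨i, l, hi, hi', hl, hl', offset_congr x rfl hmod.symm⟩
    rcases siteAdj_offset_iff.mp hadj with rfl | rfl | rfl | rfl
    exacts [horiz (by omega) hv, horiz (by omega) hv, vert (by omega) hv, vert (by omega) hv]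

theorem exists_component_eq_rectC [NeZero L] (hτ : CornerClosed fun i j => offset x i j ∈ σ)
    (hx : x ∈ σ) :
    ∃ a : Site L, ∃ l₁ l₂ : ℕ,
      1 ≤ l₁ ∧ l₁ ≤ L ∧ 1 ≤ l₂ ∧ l₂ ≤ L ∧ component σ x = rectC a l₁ l₂ := by
  have h0 : offset x 0 0 ∈ σ := by rwa [offset_zero]
  obtain ⟨lo₁, hi₁, h₁⟩ := exists_isMaxRun (P := (offset x · 0 ∈ σ)) (n := L)
    (fun i => by dsimp only; rw [offset_congr x Int.add_modEq_right rfl]) h0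
  obtain ⟨lo₂, hi₂, h₂⟩ := exists_isMaxRun (P := (offset x 0 · ∈ σ)) (n := L)
    (fun j => by dsimp only; rw [offset_congr x rfl Int.add_modEq_right]) h0
  refine ⟨offset x lo₁ lo₂, (hi₁ - lo₁ + 1).toNat, (hi₂ - lo₂ + 1).toNat,
    h₁.one_le_toNat_length, h₁.toNat_length_le, h₂.one_le_toNat_length, h₂.toNat_length_le, ?_⟩
  ext y
  rw [mem_rectC_offset_iff, component, Finset.mem_filter]
  constructor
  · exact fun hy => exists_offset_of_connectedIn hτ h₁ h₂ hy.2
  · rintro ⟨i, j, hi, hi', hj, hj', rfl⟩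
    exact ⟨hτ.box h₁ h₂ i j hi hi' hj hj', connectedIn_offset (hτ.box h₁ h₂)
      h₁.lo_nonpos h₁.hi_nonneg h₂.lo_nonpos h₂.hi_nonneg i j hi hi' hj hj'⟩

end Rectangle

theorem aniso_local_min_is_union_of_isolated_rectangles (L : ℕ) [NeZero L] (JH JV h : ℝ)
    (hJHV : JV < JH) (hh0 : 0 < h) (hh : h < 2 * JV)
    (σ : Config L)
    (hmin : ∀ x : Site L, HA JH JV h σ < HA JH JV h (flipSpin σ x)) :
    (∀ x ∈ σ, ∃ a : Site L, ∃ l₁ l₂ : ℕ,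
        1 ≤ l₁ ∧ l₁ ≤ L ∧ 1 ≤ l₂ ∧ l₂ ≤ L ∧ component σ x = rectC a l₁ l₂) ∧
    (∀ x ∈ σ, ∀ y ∈ σ, ¬ ConnectedIn σ x y →
        Isolated (component σ x) (component σ y)) :=
  ⟨fun x hx => exists_component_eq_rectC (cornerClosed_of_isLocalMin hJHV hh0 hh hmin x) hx,
    fun _ _ _ _ => isolated_component_of_not_connectedIn⟩
end

section
/- If a configuration σ consists of a single connected component of (+1)-sites that does not wrap around the torus, then H^A(σ) ≥ H^A(R(σ)), where R(σ) is the rectangular envelope of σ, and equality holds if and only if σ = R(σ). -/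
open scoped Classical

section Aux
open Finset

variable {L : ℕ}

/-- number of "sign changes" of a subset of the cycle `ZMod L`. -/
noncomputable def changesZ [NeZero L] (S : Finset (ZMod L)) : ℕ :=
  (univ.filter fun i : ZMod L => ¬ (i ∈ S ↔ i + 1 ∈ S)).card

noncomputable def rowSetZ [NeZero L] (σ : Config L) (r : ZMod L) : Finset (ZMod L) :=
  univ.filter fun i => (i, r) ∈ σ

noncomputable def dHZ [NeZero L] (σ : Config L) : ℕ :=
  (univ.filter fun x : Site L => ¬ (x ∈ σ ↔ x + (1, 0) ∈ σ)).card

noncomputable def dVZ [NeZero L] (σ : Config L) : ℕ :=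
  (univ.filter fun x : Site L => ¬ (x ∈ σ ↔ x + (0, 1) ∈ σ)).card

lemma spin_mul_spin (σ : Config L) (x y : Site L) :
    spin σ x * spin σ y = 1 - 2 * (if ¬ (x ∈ σ ↔ y ∈ σ) then (1:ℝ) else 0) := by
  by_cases hx : x ∈ σ <;> by_cases hy : y ∈ σ <;> simp [spin, hx, hy] <;> norm_num

lemma sum_spin_mul [NeZero L] (σ : Config L) (e : Site L) :
    ∑ x : Site L, spin σ x * spin σ (x + e)
      = (Fintype.card (Site L) : ℝ)
        - 2 * (((univ.filter fun x : Site L => ¬ (x ∈ σ ↔ x + e ∈ σ)).card : ℕ) : ℝ) := by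
  rw [Finset.sum_congr rfl fun x _ => spin_mul_spin σ x (x + e), Finset.sum_sub_distrib,
    Finset.sum_const, ← Finset.mul_sum, Finset.sum_boole, Finset.card_univ]
  simp [nsmul_eq_mul]

lemma sum_spin [NeZero L] (σ : Config L) :
    ∑ x : Site L, spin σ x = 2 * (σ.card : ℝ) - (Fintype.card (Site L) : ℝ) := by
  have h : ∀ x : Site L, spin σ x = 2 * (if x ∈ σ then (1:ℝ) else 0) - 1 := by
    intro x; by_cases hx : x ∈ σ <;> simp [spin, hx] <;> norm_num
  rw [Finset.sum_congr rfl fun x _ => h x, Finset.sum_sub_distrib, ← Finset.mul_sum,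
    Finset.sum_boole, Finset.sum_const, Finset.card_univ, Finset.filter_univ_mem]
  simp [nsmul_eq_mul]

lemma HA_eq_d [NeZero L] (JH JV h : ℝ) (σ : Config L) :
    HA JH JV h σ = JH * (dHZ σ : ℝ) + JV * (dVZ σ : ℝ) - h * (σ.card : ℝ)
      + (h - JH - JV) * (Fintype.card (Site L) : ℝ) / 2 := by
  rw [HA, sum_spin_mul σ (1, 0), sum_spin_mul σ (0, 1), sum_spin, dHZ, dVZ]
  ring

end Aux
section Aux2
open Finset

variable {L : ℕ}

lemma dHZ_eq_sum [NeZero L] (σ : Config L) :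
    dHZ σ = ∑ r : ZMod L, changesZ (rowSetZ σ r) := by
  rw [dHZ, Finset.card_filter, Fintype.sum_prod_type, Finset.sum_comm]
  refine Finset.sum_congr rfl fun r _ => ?_
  rw [changesZ, Finset.card_filter]
  refine Finset.sum_congr rfl fun i _ => ?_
  have h1 : ((i, r) : Site L) + (1, 0) = (i + 1, r) := by
    simp [Prod.ext_iff]
  have h2 : ∀ j : ZMod L, (j ∈ rowSetZ σ r) = ((j, r) ∈ σ) := by
    intro j; simp [rowSetZ]
  simp only [h1, h2]

lemma exists_exit [NeZero L] (S : Finset (ZMod L)) {x c : ZMod L} (hx : x ∈ S) (hc : c ∉ S) :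
    ∃ i, i ∈ S ∧ i + 1 ∉ S := by
  by_contra hno
  push_neg at hno
  have key : ∀ k : ℕ, x + (k : ZMod L) ∈ S := by
    intro k
    induction k with
    | zero => simpa using hx
    | succ n ih =>
        have := hno _ ih
        have hc : ((n + 1 : ℕ) : ZMod L) = (n : ZMod L) + 1 := by push_cast; ring
        rwa [hc, ← add_assoc]
  have h := key (c - x).val
  rw [ZMod.natCast_rightInverse (c - x)] at h
  simp at h
  exact hc h

lemma two_le_changesZ [NeZero L] {S : Finset (ZMod L)} {x c : ZMod L}
    (hx : x ∈ S) (hc : c ∉ S) : 2 ≤ changesZ S := by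
  obtain ⟨i, hi, hi1⟩ := exists_exit S hx hc
  obtain ⟨j, hj, hj1⟩ := exists_exit Sᶜ (Finset.mem_compl.mpr hc)
    (by simpa using hx : x ∉ Sᶜ)
  rw [Finset.mem_compl] at hj
  rw [Finset.mem_compl, not_not] at hj1
  have hij : i ≠ j := fun h => hj (h ▸ hi)
  have hsub : ({i, j} : Finset (ZMod L)) ⊆
      univ.filter fun a : ZMod L => ¬ (a ∈ S ↔ a + 1 ∈ S) := by
    intro a ha
    rcases Finset.mem_insert.mp ha with rfl | ha
    · simp only [Finset.mem_filter, Finset.mem_univ, true_and]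
      tauto
    · rcases Finset.mem_singleton.mp ha with rfl
      simp only [Finset.mem_filter, Finset.mem_univ, true_and]
      tauto
  calc 2 = ({i, j} : Finset (ZMod L)).card := (Finset.card_pair hij).symm
    _ ≤ _ := Finset.card_le_card hsub

lemma dHZ_ge [NeZero L] (σ : Config L) (hnw : NoWrapH σ) :
    2 * (σ.image Prod.snd).card ≤ dHZ σ := by
  obtain ⟨c, hcol⟩ := hnw
  rw [dHZ_eq_sum]
  calc 2 * (σ.image Prod.snd).card = ∑ _r ∈ σ.image Prod.snd, 2 := by
        rw [Finset.sum_const, smul_eq_mul, mul_comm]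
    _ ≤ ∑ r ∈ σ.image Prod.snd, changesZ (rowSetZ σ r) := by
        refine Finset.sum_le_sum fun r hr => ?_
        obtain ⟨y, hy, rfl⟩ := Finset.mem_image.mp hr
        have hy1 : y.1 ∈ rowSetZ σ y.2 := by simp [rowSetZ, hy]
        have hcy : c ∉ rowSetZ σ y.2 := by
          simp only [rowSetZ, Finset.mem_filter, Finset.mem_univ, true_and]
          intro hmem; exact hcol _ hmem rfl
        exact two_le_changesZ hy1 hcy
    _ ≤ _ := Finset.sum_le_sum_of_subset (Finset.subset_univ _)

end Aux2
section Aux3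
open Finset

variable {L : ℕ}

lemma mem_rectC {a : Site L} {l₁ l₂ : ℕ} {x : Site L} :
    x ∈ rectC a l₁ l₂ ↔ ∃ i < l₁, ∃ j < l₂, x = a + ((i : ZMod L), (j : ZMod L)) := by
  constructor
  · intro hx
    obtain ⟨p, hp, hpx⟩ := Finset.mem_image.mp hx
    rw [Finset.mem_product, Finset.mem_range, Finset.mem_range] at hp
    exact ⟨p.1, hp.1, p.2, hp.2, hpx.symm⟩
  · rintro ⟨i, hi, j, hj, rfl⟩
    exact Finset.mem_image.mpr ⟨(i, j), by
      rw [Finset.mem_product, Finset.mem_range, Finset.mem_range]; exact ⟨hi, hj⟩, rfl⟩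

lemma arc_mem_iff [NeZero L] {b : ZMod L} {l : ℕ} (hl : l ≤ L) (i : ZMod L) :
    (∃ k < l, i = b + (k : ZMod L)) ↔ (i - b).val < l := by
  constructor
  · rintro ⟨k, hk, rfl⟩
    rw [add_sub_cancel_left, ZMod.val_cast_of_lt (lt_of_lt_of_le hk hl)]
    exact hk
  · intro h
    refine ⟨(i - b).val, h, ?_⟩
    rw [ZMod.natCast_rightInverse (i - b)]
    ring

lemma changesZ_le_two_of_arc [NeZero L] {S : Finset (ZMod L)} {b : ZMod L} {l : ℕ}
    (hl : l ≤ L) (hS : ∀ i, i ∈ S ↔ (i - b).val < l) : changesZ S ≤ 2 := by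
  rcases Nat.eq_zero_or_pos l with rfl | hl0
  · have : changesZ S = 0 := by
      rw [changesZ]
      refine Finset.card_eq_zero.mpr (Finset.filter_eq_empty_iff.mpr ?_)
      intro i _
      simp [hS]
    omega
  rcases eq_or_lt_of_le hl with rfl | hlL
  · have : changesZ S = 0 := by
      rw [changesZ]
      refine Finset.card_eq_zero.mpr (Finset.filter_eq_empty_iff.mpr ?_)
      intro i _
      simp [hS, ZMod.val_lt]
    omega
  -- now 1 ≤ l < L
  have hsub : (univ.filter fun i : ZMod L => ¬ (i ∈ S ↔ i + 1 ∈ S)) ⊆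
      {b + ((l - 1 : ℕ) : ZMod L), b + ((L - 1 : ℕ) : ZMod L)} := by
    intro i hi
    rw [Finset.mem_filter] at hi
    have hchange := hi.2
    rw [hS, hS] at hchange
    have hstep : i + 1 - b = (i - b) + 1 := by ring
    have hL2 : 1 < L := lt_of_le_of_lt hl0 hlL
    have hval1 : (1 : ZMod L).val = 1 := by
      have : ((1 : ℕ) : ZMod L).val = 1 := ZMod.val_cast_of_lt hL2
      simpa using this
    set u := (i - b).val with hu
    have huL : u < L := ZMod.val_lt _
    have hcases : u = l - 1 ∨ u = L - 1 := by
      rcases Nat.lt_or_ge u (L - 1) with hu1 | hu1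
      · left
        have hadd : (i + 1 - b).val = u + 1 := by
          rw [hstep, ZMod.val_add_of_lt]
          · rw [hval1]
          · rw [hval1]; omega
        rw [hadd] at hchange
        omega
      · right; omega
    have hi_eq : i = b + ((u : ℕ) : ZMod L) := by
      rw [ZMod.natCast_rightInverse (i - b)]; ring
    rcases hcases with h | h <;> rw [h] at hi_eq <;> simp [Finset.mem_insert, hi_eq]
  calc changesZ S ≤ ({b + ((l - 1 : ℕ) : ZMod L), b + ((L - 1 : ℕ) : ZMod L)} :
      Finset (ZMod L)).card := Finset.card_le_card hsub
    _ ≤ 2 := Finset.card_insert_le _ _ |>.trans (by simp)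

lemma rowSetZ_rect [NeZero L] (a : Site L) (l₁ l₂ : ℕ) (r : ZMod L) (i : ZMod L) :
    i ∈ rowSetZ (rectC a l₁ l₂) r ↔
      (∃ k < l₁, i = a.1 + (k : ZMod L)) ∧ (∃ j < l₂, r = a.2 + (j : ZMod L)) := by
  simp only [rowSetZ, Finset.mem_filter, Finset.mem_univ, true_and, mem_rectC]
  constructor
  · rintro ⟨k, hk, j, hj, hij⟩
    rw [Prod.ext_iff] at hij
    exact ⟨⟨k, hk, hij.1⟩, ⟨j, hj, hij.2⟩⟩
  · rintro ⟨⟨k, hk, hik⟩, ⟨j, hj, hrj⟩⟩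
    exact ⟨k, hk, j, hj, by rw [Prod.ext_iff]; exact ⟨hik, hrj⟩⟩

lemma dHZ_rect_le [NeZero L] (a : Site L) (l₁ l₂ : ℕ) (h₁ : l₁ ≤ L) (h₂ : l₂ ≤ L) :
    dHZ (rectC a l₁ l₂) ≤ 2 * l₂ := by
  rw [dHZ_eq_sum]
  set T : Finset (ZMod L) := (Finset.range l₂).image (fun j : ℕ => a.2 + (j : ZMod L)) with hT
  have hzero : ∀ r ∈ (univ : Finset (ZMod L)), r ∉ T →
      changesZ (rowSetZ (rectC a l₁ l₂) r) = 0 := by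
    intro r _ hr
    have hempty : ∀ i : ZMod L, i ∉ rowSetZ (rectC a l₁ l₂) r := by
      intro i hi
      rw [rowSetZ_rect] at hi
      obtain ⟨j, hj, hrj⟩ := hi.2
      exact hr (Finset.mem_image.mpr ⟨j, Finset.mem_range.mpr hj, hrj.symm⟩)
    rw [changesZ]
    refine Finset.card_eq_zero.mpr (Finset.filter_eq_empty_iff.mpr ?_)
    intro i _
    simp [hempty i, hempty (i + 1)]
  rw [← Finset.sum_subset (Finset.subset_univ T) hzero]
  calc ∑ r ∈ T, changesZ (rowSetZ (rectC a l₁ l₂) r)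
      ≤ ∑ _r ∈ T, 2 := by
        refine Finset.sum_le_sum fun r hr => ?_
        obtain ⟨j, hj, rfl⟩ := Finset.mem_image.mp hr
        rw [Finset.mem_range] at hj
        refine changesZ_le_two_of_arc (b := a.1) h₁ fun i => ?_
        rw [rowSetZ_rect, ← arc_mem_iff h₁ i]
        constructor
        · exact fun h => h.1
        · exact fun h => ⟨h, ⟨j, hj, rfl⟩⟩
    _ = 2 * T.card := by rw [Finset.sum_const, smul_eq_mul, mul_comm]
    _ ≤ 2 * l₂ := by
        have h : ((Finset.range l₂).image (fun j : ℕ => a.2 + (j : ZMod L))).card ≤ l₂ := by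
          simpa using Finset.card_image_le (s := Finset.range l₂)
            (f := fun j : ℕ => a.2 + (j : ZMod L))
        exact Nat.mul_le_mul_left 2 ((congrArg Finset.card hT).le.trans h)

lemma card_rectC [NeZero L] (a : Site L) {l₁ l₂ : ℕ} (h₁ : l₁ ≤ L) (h₂ : l₂ ≤ L) :
    (rectC a l₁ l₂).card = l₁ * l₂ := by
  rw [rectC, Finset.card_image_of_injOn, Finset.card_product, Finset.card_range,
    Finset.card_range]
  rintro ⟨i, j⟩ hij ⟨i', j'⟩ hij' heq
  rw [Finset.mem_coe, Finset.mem_product, Finset.mem_range, Finset.mem_range] at hij hij'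
  rw [Prod.ext_iff] at heq ⊢
  simp only [Prod.fst_add, Prod.snd_add] at heq
  obtain ⟨h1, h2⟩ := heq
  have h1' : (i : ZMod L) = (i' : ZMod L) := by
    have := h1; simpa using add_left_cancel this
  have h2' : (j : ZMod L) = (j' : ZMod L) := by
    have := h2; simpa using add_left_cancel this
  constructor
  · have := congrArg ZMod.val h1'
    rwa [ZMod.val_cast_of_lt (lt_of_lt_of_le hij.1 h₁),
      ZMod.val_cast_of_lt (lt_of_lt_of_le hij'.1 h₁)] at this
  · have := congrArg ZMod.val h2'
    rwa [ZMod.val_cast_of_lt (lt_of_lt_of_le hij.2 h₂),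
      ZMod.val_cast_of_lt (lt_of_lt_of_le hij'.2 h₂)] at this

lemma rectC_min [NeZero L] (a : Site L) (l₁ l₂ : ℕ) :
    rectC a l₁ l₂ = rectC a (min l₁ L) (min l₂ L) := by
  have hL : 0 < L := Nat.pos_of_ne_zero (NeZero.ne L)
  ext x
  simp only [mem_rectC]
  constructor
  · rintro ⟨i, hi, j, hj, rfl⟩
    refine ⟨i % L, ?_, j % L, ?_, ?_⟩
    · exact lt_min (Nat.lt_of_le_of_lt (Nat.mod_le i L) hi) (Nat.mod_lt i hL)
    · exact lt_min (Nat.lt_of_le_of_lt (Nat.mod_le j L) hj) (Nat.mod_lt j hL)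
    · rw [ZMod.natCast_mod, ZMod.natCast_mod]
  · rintro ⟨i, hi, j, hj, rfl⟩
    exact ⟨i, lt_of_lt_of_le hi (min_le_left _ _), j, lt_of_lt_of_le hj (min_le_left _ _), rfl⟩

end Aux3
section Aux4
open Finset

variable {L : ℕ}

noncomputable def swapC (σ : Config L) : Config L := σ.image Prod.swap

lemma mem_swapC {σ : Config L} {x : Site L} : x ∈ swapC σ ↔ x.swap ∈ σ := by
  constructor
  · intro hx
    obtain ⟨y, hy, rfl⟩ := Finset.mem_image.mp hx
    simpa using hy
  · intro hx
    exact Finset.mem_image.mpr ⟨x.swap, hx, by simp⟩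

lemma dVZ_eq_dHZ_swap [NeZero L] (σ : Config L) : dVZ σ = dHZ (swapC σ) := by
  rw [dVZ, dHZ]
  refine Finset.card_bij' (fun x _ => Prod.swap x) (fun x _ => Prod.swap x) ?_ ?_ ?_ ?_
  · intro x hx
    rw [Finset.mem_filter] at hx ⊢
    refine ⟨Finset.mem_univ _, ?_⟩
    have h1 : x.swap ∈ swapC σ ↔ x ∈ σ := by rw [mem_swapC]; simp
    have h2 : x.swap + (1, 0) ∈ swapC σ ↔ x + (0, 1) ∈ σ := by
      rw [mem_swapC]
      have : (x.swap + (1, 0)).swap = x + (0, 1) := by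
        simp [Prod.ext_iff]
      rw [this]
    rw [h1, h2]
    exact hx.2
  · intro x hx
    rw [Finset.mem_filter] at hx ⊢
    refine ⟨Finset.mem_univ _, ?_⟩
    have h1 : x.swap ∈ σ ↔ x ∈ swapC σ := by rw [mem_swapC]
    have h2 : x.swap + (0, 1) ∈ σ ↔ x + (1, 0) ∈ swapC σ := by
      rw [mem_swapC]
      have : (x + (1, 0)).swap = x.swap + (0, 1) := by
        simp [Prod.ext_iff]
      rw [this]
    rw [h1, h2]
    exact hx.2
  · intro x _; simp
  · intro x _; simp

lemma swapC_rectC [NeZero L] (a : Site L) (l₁ l₂ : ℕ) :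
    swapC (rectC a l₁ l₂) = rectC a.swap l₂ l₁ := by
  ext x
  rw [mem_swapC, mem_rectC, mem_rectC]
  constructor
  · rintro ⟨i, hi, j, hj, hx⟩
    refine ⟨j, hj, i, hi, ?_⟩
    have := congrArg Prod.swap hx
    simpa [Prod.ext_iff] using this
  · rintro ⟨j, hj, i, hi, hx⟩
    refine ⟨i, hi, j, hj, ?_⟩
    have := congrArg Prod.swap hx
    simpa [Prod.ext_iff] using this

lemma image_snd_swapC (σ : Config L) :
    (swapC σ).image Prod.snd = σ.image Prod.fst := by
  rw [swapC, Finset.image_image]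
  rfl

lemma noWrapH_swapC {σ : Config L} (h : NoWrapV σ) : NoWrapH (swapC σ) := by
  obtain ⟨c, hc⟩ := h
  exact ⟨c, fun x hx => hc x.swap (mem_swapC.mp hx)⟩

lemma siteAdj_swap {u v : Site L} (h : SiteAdj u v) : SiteAdj u.swap v.swap := by
  rcases h with h | h | h | h
  · exact Or.inr (Or.inr (Or.inl (by subst h; simp [Prod.ext_iff])))
  · exact Or.inr (Or.inr (Or.inr (by subst h; simp [Prod.ext_iff])))
  · exact Or.inl (by subst h; simp [Prod.ext_iff])
  · exact Or.inr (Or.inl (by subst h; simp [Prod.ext_iff]))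

lemma connectedIn_swapC {σ : Config L} {x y : Site L} (h : ConnectedIn σ x y) :
    ConnectedIn (swapC σ) x.swap y.swap := by
  induction h with
  | refl => exact Relation.ReflTransGen.refl
  | tail _ hstep ih =>
      exact ih.tail ⟨mem_swapC.mpr (by simpa using hstep.1),
        mem_swapC.mpr (by simpa using hstep.2.1), siteAdj_swap hstep.2.2⟩

lemma droplet_swapC {σ : Config L} (h : IsSingleDroplet σ) : IsSingleDroplet (swapC σ) := by
  obtain ⟨⟨x, hx⟩, hconn⟩ := h
  refine ⟨⟨x.swap, Finset.mem_image.mpr ⟨x, hx, rfl⟩⟩, ?_⟩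
  intro u hu v hv
  have hu' := mem_swapC.mp hu
  have hv' := mem_swapC.mp hv
  have := connectedIn_swapC (hconn _ hu' _ hv')
  simpa using this

end Aux4
section Aux5
open Finset

variable {L : ℕ}

lemma proj_snd_connected {σ : Config L}
    (hconn : ∀ x ∈ σ, ∀ y ∈ σ, ConnectedIn σ x y)
    {r r' : ZMod L} (hr : r ∈ σ.image Prod.snd) (hr' : r' ∈ σ.image Prod.snd) :
    Relation.ReflTransGen (fun u v : ZMod L =>
      u ∈ σ.image Prod.snd ∧ v ∈ σ.image Prod.snd ∧ (v = u + 1 ∨ v = u - 1)) r r' := by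
  obtain ⟨x, hx, rfl⟩ := Finset.mem_image.mp hr
  obtain ⟨y, hy, rfl⟩ := Finset.mem_image.mp hr'
  have key : ∀ {p q : Site L}, ConnectedIn σ p q →
      Relation.ReflTransGen (fun u v : ZMod L =>
        u ∈ σ.image Prod.snd ∧ v ∈ σ.image Prod.snd ∧ (v = u + 1 ∨ v = u - 1)) p.2 q.2 := by
    intro p q h
    induction h with
    | refl => exact Relation.ReflTransGen.refl
    | @tail b c _ hstep ih =>
        obtain ⟨hb, hrest⟩ := hstep
        obtain ⟨hcmem, hadj⟩ := hrest
        have hbT : b.2 ∈ σ.image Prod.snd := Finset.mem_image.mpr ⟨b, hb, rfl⟩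
        have hcT : c.2 ∈ σ.image Prod.snd := Finset.mem_image.mpr ⟨c, hcmem, rfl⟩
        rcases hadj with h | h | h | h
        · have : c.2 = b.2 := by subst h; simp
          rwa [this]
        · have : c.2 = b.2 := by subst h; simp
          rwa [this]
        · refine ih.tail ⟨hbT, hcT, Or.inl ?_⟩
          subst h; simp
        · refine ih.tail ⟨hbT, hcT, Or.inr ?_⟩
          subst h; simp [sub_eq_add_neg]
  exact key (hconn x hx y hy)

lemma nat_chain_interval {S : Finset ℕ} {a b : ℕ}
    (h : Relation.ReflTransGen
      (fun u v => u ∈ S ∧ v ∈ S ∧ (v = u + 1 ∨ u = v + 1)) a b)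
    (ha : a ∈ S) : ∀ m, a ≤ m → m ≤ b → m ∈ S := by
  induction h with
  | refl => intro m h1 h2; rwa [le_antisymm h2 h1]
  | @tail p q _ hstep ih =>
      intro m h1 h2
      obtain ⟨hp, hq, hor⟩ := hstep
      rcases hor with rfl | heq
      · rcases Nat.lt_or_ge m (p + 1) with hm | hm
        · exact ih m h1 (Nat.lt_succ_iff.mp hm)
        · have : m = p + 1 := le_antisymm h2 hm
          rwa [this]
      · exact ih m h1 (by omega)

lemma arc_of_connected [NeZero L] {T : Finset (ZMod L)} {c : ZMod L} (hc : c ∉ T)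
    (hconn : ∀ a ∈ T, ∀ b ∈ T, Relation.ReflTransGen
      (fun u v : ZMod L => u ∈ T ∧ v ∈ T ∧ (v = u + 1 ∨ v = u - 1)) a b) :
    ∃ b : ZMod L, ∀ x ∈ T, ∃ i < T.card, x = b + (i : ZMod L) := by
  rcases T.eq_empty_or_nonempty with rfl | hne
  · exact ⟨0, by simp⟩
  obtain ⟨x₀, hx₀⟩ := hne
  have hL2 : 1 < L := by
    rw [← ZMod.card L]
    exact Fintype.one_lt_card_iff.mpr ⟨x₀, c, fun h => hc (h ▸ hx₀)⟩
  have hval1 : (1 : ZMod L).val = 1 := by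
    have : ((1 : ℕ) : ZMod L).val = 1 := ZMod.val_cast_of_lt hL2
    simpa using this
  set f : ZMod L → ℕ := fun x => (x - (c + 1)).val with hf
  have hfne : ∀ u : ZMod L, u ≠ c → f u < L - 1 := by
    intro u hu
    have h1 : f u < L := ZMod.val_lt _
    have h2 : f u ≠ L - 1 := by
      intro heq
      apply hu
      have : u - (c + 1) = ((L - 1 : ℕ) : ZMod L) := by
        apply ZMod.val_injective
        rw [ZMod.val_cast_of_lt (by omega)]
        exact heq
      have hm1 : ((L - 1 : ℕ) : ZMod L) = -1 := by
        have : ((L - 1 : ℕ) : ZMod L) + 1 = 0 := by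
          have : ((L - 1 : ℕ) : ZMod L) + ((1 : ℕ) : ZMod L) = ((L : ℕ) : ZMod L) := by
            rw [← Nat.cast_add]; congr 1; omega
          simpa [ZMod.natCast_self] using this
        linear_combination this
      rw [hm1] at this
      have := congrArg (· + (c + 1)) this
      simpa using this
    omega
  have hstep_f : ∀ u ∈ T, ∀ v ∈ T, v = u + 1 → f v = f u + 1 := by
    intro u hu v hv hvu
    have hulo : f u < L - 1 := hfne u (fun h => hc (h ▸ hu))
    rw [hf]
    simp only
    have : v - (c + 1) = (u - (c + 1)) + 1 := by rw [hvu]; ring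
    rw [this, ZMod.val_add_of_lt]
    · rw [hval1]
    · rw [hval1]
      have : (u - (c + 1)).val = f u := rfl
      omega
  set T' : Finset ℕ := T.image f with hT'
  have hmemT' : ∀ u ∈ T, f u ∈ T' := fun u hu => Finset.mem_image.mpr ⟨u, hu, rfl⟩
  have hT'conn : ∀ a' ∈ T', ∀ b' ∈ T', Relation.ReflTransGen
      (fun u v => u ∈ T' ∧ v ∈ T' ∧ (v = u + 1 ∨ u = v + 1)) a' b' := by
    intro a' ha' b' hb'
    obtain ⟨a, ha, rfl⟩ := Finset.mem_image.mp ha'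
    obtain ⟨b, hb, rfl⟩ := Finset.mem_image.mp hb'
    have h := hconn a ha b hb
    clear ha' hb' ha hb
    induction h with
    | refl => exact Relation.ReflTransGen.refl
    | @tail p q _ hstep ih =>
        obtain ⟨hp, hq, hor⟩ := hstep
        rcases hor with h | h
        · exact ih.tail ⟨hmemT' p hp, hmemT' q hq, Or.inl (hstep_f p hp q hq h)⟩
        · have hpq : p = q + 1 := by rw [h]; ring
          exact ih.tail ⟨hmemT' p hp, hmemT' q hq, Or.inr (hstep_f q hq p hp hpq)⟩
  have hne' : T'.Nonempty := ⟨f x₀, hmemT' x₀ hx₀⟩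
  set m := T'.min' hne' with hm
  set M := T'.max' hne' with hM
  have hIcc : ∀ v, m ≤ v → v ≤ M → v ∈ T' := by
    intro v h1 h2
    exact nat_chain_interval (hT'conn m (T'.min'_mem hne') M (T'.max'_mem hne'))
      (T'.min'_mem hne') v h1 h2
  have hT'eq : T' = Finset.Icc m M := by
    apply Finset.Subset.antisymm
    · intro v hv
      exact Finset.mem_Icc.mpr ⟨T'.min'_le v hv, T'.le_max' v hv⟩
    · intro v hv
      obtain ⟨h1, h2⟩ := Finset.mem_Icc.mp hv
      exact hIcc v h1 h2
  have hcard' : T'.card = M + 1 - m := by rw [hT'eq, Nat.card_Icc]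
  have hfinj : Set.InjOn f T := by
    intro u _ v _ h
    have : u - (c + 1) = v - (c + 1) := ZMod.val_injective L h
    have := congrArg (· + (c + 1)) this
    simpa using this
  have hcardT : T.card = T'.card := (Finset.card_image_of_injOn hfinj).symm
  have hmM : m ≤ M := T'.min'_le M (T'.max'_mem hne')
  refine ⟨c + 1 + ((m : ℕ) : ZMod L), fun x hx => ?_⟩
  have hfx : f x ∈ T' := hmemT' x hx
  have h1 : m ≤ f x := T'.min'_le _ hfx
  have h2 : f x ≤ M := T'.le_max' _ hfx
  refine ⟨f x - m, by omega, ?_⟩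
  have hcast : ((f x - m : ℕ) : ZMod L) = ((f x : ℕ) : ZMod L) - ((m : ℕ) : ZMod L) := by
    rw [Nat.cast_sub h1]
  have hfx' : ((f x : ℕ) : ZMod L) = x - (c + 1) := ZMod.natCast_rightInverse _
  rw [hcast, hfx']
  ring

end Aux5
theorem aniso_energy_ge_envelope (L : ℕ) [NeZero L] (JH JV h : ℝ)
    (hJHV : JV < JH) (hh0 : 0 < h) (hh : h < 2 * JV)
    (σ R : Config L) (hconn : IsSingleDroplet σ)
    (hnwH : NoWrapH σ) (hnwV : NoWrapV σ) (henv : IsEnvelope σ R) :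
    HA JH JV h σ ≥ HA JH JV h R ∧ (HA JH JV h σ = HA JH JV h R ↔ σ = R) := by
  classical
  obtain ⟨hne, hconn'⟩ := hconn
  obtain ⟨⟨a, l₁, l₂, hReq⟩, hsub, hmin⟩ := henv
  set m₁ := min l₁ L with hm₁
  set m₂ := min l₂ L with hm₂
  have hReq' : R = rectC a m₁ m₂ := by rw [hReq, rectC_min]
  have hm₁L : m₁ ≤ L := min_le_right _ _
  have hm₂L : m₂ ≤ L := min_le_right _ _
  have hcardR : R.card = m₁ * m₂ := by rw [hReq']; exact card_rectC a hm₁L hm₂L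
  obtain ⟨x₀, hx₀⟩ := hne
  have hx₀R := hsub hx₀
  have hm₁pos : 1 ≤ m₁ := by
    rw [hReq'] at hx₀R
    obtain ⟨i, hi, _⟩ := mem_rectC.mp hx₀R
    omega
  have hm₂pos : 1 ≤ m₂ := by
    rw [hReq'] at hx₀R
    obtain ⟨i, hi, j, hj, _⟩ := mem_rectC.mp hx₀R
    omega
  set k := (σ.image Prod.fst).card with hk
  set r := (σ.image Prod.snd).card with hr
  have hrle : r ≤ m₂ := by
    have hsubr : σ.image Prod.snd ⊆
        (Finset.range m₂).image (fun j : ℕ => a.2 + (j : ZMod L)) := by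
      intro t ht
      obtain ⟨x, hx, rfl⟩ := Finset.mem_image.mp ht
      have hxR := hsub hx
      rw [hReq'] at hxR
      obtain ⟨i, hi, j, hj, hxe⟩ := mem_rectC.mp hxR
      refine Finset.mem_image.mpr ⟨j, Finset.mem_range.mpr hj, ?_⟩
      rw [hxe]; simp
    calc r ≤ _ := Finset.card_le_card hsubr
      _ ≤ m₂ := by
        simpa using Finset.card_image_le (s := Finset.range m₂)
          (f := fun j : ℕ => a.2 + (j : ZMod L))
  have hkle : k ≤ m₁ := by
    have hsubk : σ.image Prod.fst ⊆
        (Finset.range m₁).image (fun i : ℕ => a.1 + (i : ZMod L)) := by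
      intro t ht
      obtain ⟨x, hx, rfl⟩ := Finset.mem_image.mp ht
      have hxR := hsub hx
      rw [hReq'] at hxR
      obtain ⟨i, hi, j, hj, hxe⟩ := mem_rectC.mp hxR
      refine Finset.mem_image.mpr ⟨i, Finset.mem_range.mpr hi, ?_⟩
      rw [hxe]; simp
    calc k ≤ _ := Finset.card_le_card hsubk
      _ ≤ m₁ := by
        simpa using Finset.card_image_le (s := Finset.range m₁)
          (f := fun i : ℕ => a.1 + (i : ZMod L))
  obtain ⟨cV, hcV⟩ := hnwV
  have hcVnot : cV ∉ σ.image Prod.snd := by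
    intro hmem
    obtain ⟨x, hx, hx2⟩ := Finset.mem_image.mp hmem
    exact hcV x hx hx2
  obtain ⟨br, hbr⟩ := arc_of_connected hcVnot
    (fun u hu v hv => proj_snd_connected hconn' hu hv)
  obtain ⟨cH, hcH⟩ := hnwH
  have hcHnot : cH ∉ σ.image Prod.fst := by
    intro hmem
    obtain ⟨x, hx, hx1⟩ := Finset.mem_image.mp hmem
    exact hcH x hx hx1
  have hswconn : ∀ x ∈ swapC σ, ∀ y ∈ swapC σ, ConnectedIn (swapC σ) x y :=
    (droplet_swapC ⟨⟨x₀, hx₀⟩, hconn'⟩).2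
  have hconnC : ∀ u ∈ σ.image Prod.fst, ∀ v ∈ σ.image Prod.fst,
      Relation.ReflTransGen (fun u v : ZMod L => u ∈ σ.image Prod.fst ∧
        v ∈ σ.image Prod.fst ∧ (v = u + 1 ∨ v = u - 1)) u v := by
    rw [← image_snd_swapC σ]
    exact fun u hu v hv => proj_snd_connected hswconn hu hv
  obtain ⟨bc, hbc⟩ := arc_of_connected hcHnot hconnC
  have hsubR0 : σ ⊆ rectC (bc, br) k r := by
    intro x hx
    obtain ⟨i, hik, hxi⟩ := hbc x.1 (Finset.mem_image.mpr ⟨x, hx, rfl⟩)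
    obtain ⟨j, hjr, hxj⟩ := hbr x.2 (Finset.mem_image.mpr ⟨x, hx, rfl⟩)
    refine mem_rectC.mpr ⟨i, hik, j, hjr, ?_⟩
    rw [Prod.ext_iff]
    exact ⟨by simpa using hxi, by simpa using hxj⟩
  have hkL : k ≤ L := by
    have := Finset.card_le_univ (σ.image Prod.fst)
    rwa [ZMod.card] at this
  have hrL : r ≤ L := by
    have := Finset.card_le_univ (σ.image Prod.snd)
    rwa [ZMod.card] at this
  have hminle : R.card ≤ k * r := by
    have := hmin (rectC (bc, br) k r) ⟨(bc, br), k, r, rfl⟩ hsubR0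
    rwa [card_rectC _ hkL hrL] at this
  rw [hcardR] at hminle
  have hreq : r = m₂ := by
    have h1 : k * r ≤ m₁ * r := Nat.mul_le_mul_right r hkle
    have h2 : m₁ * r ≤ m₁ * m₂ := Nat.mul_le_mul_left m₁ hrle
    have h3 : m₁ * r = m₁ * m₂ := le_antisymm h2 (hminle.trans h1)
    exact Nat.eq_of_mul_eq_mul_left (by omega) h3
  have hkeq : k = m₁ := by
    have h1 : k * r ≤ m₁ * r := Nat.mul_le_mul_right r hkle
    have h2 : m₁ * r ≤ m₁ * m₂ := Nat.mul_le_mul_left m₁ hrle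
    have h3 : k * r = m₁ * r := le_antisymm h1 (h2.trans hminle)
    have hr1 : 0 < r := hreq ▸ (by omega : 0 < m₂)
    exact Nat.eq_of_mul_eq_mul_right hr1 h3
  have hdH : dHZ R ≤ dHZ σ := by
    calc dHZ R ≤ 2 * m₂ := by rw [hReq']; exact dHZ_rect_le a m₁ m₂ hm₁L hm₂L
      _ = 2 * r := by rw [hreq]
      _ ≤ dHZ σ := dHZ_ge σ ⟨cH, hcH⟩
  have hdV : dVZ R ≤ dVZ σ := by
    rw [dVZ_eq_dHZ_swap, dVZ_eq_dHZ_swap]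
    calc dHZ (swapC R) ≤ 2 * m₁ := by
          rw [hReq', swapC_rectC]
          exact dHZ_rect_le a.swap m₂ m₁ hm₂L hm₁L
      _ = 2 * k := by rw [hkeq]
      _ = 2 * ((swapC σ).image Prod.snd).card := by rw [image_snd_swapC]
      _ ≤ dHZ (swapC σ) := dHZ_ge (swapC σ) (noWrapH_swapC ⟨cV, hcV⟩)
  have hcardle : σ.card ≤ R.card := Finset.card_le_card hsub
  have hJV : 0 < JV := by linarith
  have hJH : 0 < JH := by linarith
  have t1 : JH * (dHZ R : ℝ) ≤ JH * (dHZ σ : ℝ) :=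
    mul_le_mul_of_nonneg_left (Nat.cast_le.mpr hdH) hJH.le
  have t2 : JV * (dVZ R : ℝ) ≤ JV * (dVZ σ : ℝ) :=
    mul_le_mul_of_nonneg_left (Nat.cast_le.mpr hdV) hJV.le
  have t3 : h * (σ.card : ℝ) ≤ h * (R.card : ℝ) :=
    mul_le_mul_of_nonneg_left (Nat.cast_le.mpr hcardle) hh0.le
  rw [HA_eq_d JH JV h σ, HA_eq_d JH JV h R]
  refine ⟨by linarith, ?_, ?_⟩
  · intro heq
    have hc : h * (R.card : ℝ) ≤ h * (σ.card : ℝ) := by linarith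
    have hc' : (R.card : ℝ) ≤ (σ.card : ℝ) := le_of_mul_le_mul_left hc hh0
    exact (Finset.eq_of_subset_of_card_le hsub (Nat.cast_le.mp hc')).symm ▸ rfl
  · rintro rfl
    rfl
end
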